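/- arXiv:1201.2207 — 3 statements merged into one kernel-verified Lean document; each statement's English description precedes it below -/
import Mathlib

section
/- Let m and h be positive integers, let P : Fin h × Fin m → ℝ be decision probabilities satisfying P(i,j) > 0 for all i,j and ∑_{i=1}^{h} P(i,j) = 1 for every j, let G : ℝ^m → ℝ be a convex function, let G' : ℝ^m → ℝ^m be a subgradient selection for G (i.e., G(y) ≥ G(x) + ⟨G'(x), y - x⟩ for all x, y ∈ ℝ^m), and let φ : ℝ^m → ℝ^{h×m} satisfy ∑_{i=1}^{h} φ(r)_{i,j} = G'(r)_j for every r and every j. Define the payment function Ψ(r, i, j) = G(r) - ⟨G'(r), r⟩ + φ(r)_{i,j} / P(i,j). Then Ψ is proper: for all probability vectors b, r in the simplex Δ_m, EU(b, b) ≥ EU(b, r), where EU(b, r) = ∑_{i=1}^{h} ∑_{j=1}^{m} P(i,j) · b_j · Ψ(r, i, j). -/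
/-!
Averaged over the decision `i` drawn with probability `P (i, j)`, the division by
`P (i, j)` cancels, so the expected payment for reporting `r` under belief `b` collapses to
`G r + ⟨G' r, b - r⟩`: the supporting hyperplane of `G` at `r`, evaluated at `b`.
The subgradient inequality says this never exceeds `G b`, which is the expected payment for
reporting `b` truthfully.
-/

open Finset

theorem sum_sum_mul_add_div_eq {ι κ : Type*} [Fintype ι] [Fintype κ] (P : ι × κ → ℝ)
    (hP : ∀ i j, P (i, j) ≠ 0) (hPsum : ∀ j, ∑ i, P (i, j) = 1)
    (b : κ → ℝ) (hb : ∑ j, b j = 1) (c : ℝ) (φ : ι → κ → ℝ) :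
    ∑ i, ∑ j, P (i, j) * b j * (c + φ i j / P (i, j)) = c + ∑ j, (∑ i, φ i j) * b j := by
  have hterm : ∀ i j,
      P (i, j) * b j * (c + φ i j / P (i, j)) = P (i, j) * (b j * c) + φ i j * b j := by
    intro i j
    field_simp [hP i j]
  simp_rw [hterm, sum_add_distrib]
  rw [sum_comm, sum_comm (f := fun i j => φ i j * b j)]
  simp_rw [← sum_mul, hPsum, one_mul, ← sum_mul, hb, one_mul]

theorem payment_function_proper_general
    (m h : ℕ)
    (P : Fin h × Fin m → ℝ)
    (hPpos : ∀ i j, 0 < P (i, j))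
    (hPsum : ∀ j : Fin m, ∑ i : Fin h, P (i, j) = 1)
    (G : (Fin m → ℝ) → ℝ)
    (G' : (Fin m → ℝ) → (Fin m → ℝ))
    (hG'sub : ∀ x y : Fin m → ℝ, G x + ∑ j, G' x j * (y j - x j) ≤ G y)
    (φ : (Fin m → ℝ) → Fin h → Fin m → ℝ)
    (hφ : ∀ (r : Fin m → ℝ) (j : Fin m), ∑ i : Fin h, φ r i j = G' r j)
    (Ψ : (Fin m → ℝ) → Fin h → Fin m → ℝ)
    (hΨ : ∀ (r : Fin m → ℝ) (i : Fin h) (j : Fin m),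
      Ψ r i j = G r - (∑ k, G' r k * r k) + φ r i j / P (i, j))
    (b r : Fin m → ℝ)
    (hb_sum : ∑ j, b j = 1) :
    ∑ i : Fin h, ∑ j : Fin m, P (i, j) * b j * Ψ r i j ≤
      ∑ i : Fin h, ∑ j : Fin m, P (i, j) * b j * Ψ b i j := by
  have expected_payment : ∀ s, ∑ i, ∑ j, P (i, j) * b j * Ψ s i j
      = G s + ∑ j, G' s j * (b j - s j) := by
    intro s
    simp_rw [hΨ, sum_sum_mul_add_div_eq P (fun i j => (hPpos i j).ne') hPsum b hb_sum, hφ,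
      mul_sub, sum_sub_distrib]
    ring
  rw [expected_payment r, expected_payment b]
  simpa using hG'sub r b

/-- A payment function of the form
`Ψ(r, i, j) = G(r) - ⟨G'(r), r⟩ + φ(r)_{i,j} / P(i,j)`, with `G` convex,
`G'` a subgradient selection for `G`, and `φ` summing over decisions to `G'`,
is proper: truthful reporting maximizes expected utility. -/
theorem payment_function_proper
    (m h : ℕ) (hm : 0 < m) (hh : 0 < h)
    (P : Fin h × Fin m → ℝ)
    (hPpos : ∀ i j, 0 < P (i, j))
    (hPsum : ∀ j : Fin m, ∑ i : Fin h, P (i, j) = 1)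
    (G : (Fin m → ℝ) → ℝ)
    (hGconv : ConvexOn ℝ Set.univ G)
    (G' : (Fin m → ℝ) → (Fin m → ℝ))
    (hG'sub : ∀ x y : Fin m → ℝ, G x + ∑ j, G' x j * (y j - x j) ≤ G y)
    (φ : (Fin m → ℝ) → Fin h → Fin m → ℝ)
    (hφ : ∀ (r : Fin m → ℝ) (j : Fin m), ∑ i : Fin h, φ r i j = G' r j)
    (Ψ : (Fin m → ℝ) → Fin h → Fin m → ℝ)
    (hΨ : ∀ (r : Fin m → ℝ) (i : Fin h) (j : Fin m),
      Ψ r i j = G r - (∑ k, G' r k * r k) + φ r i j / P (i, j))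
    (b r : Fin m → ℝ)
    (hb_nonneg : ∀ j, 0 ≤ b j) (hb_sum : ∑ j, b j = 1)
    (hr_nonneg : ∀ j, 0 ≤ r j) (hr_sum : ∑ j, r j = 1) :
    ∑ i : Fin h, ∑ j : Fin m, P (i, j) * b j * Ψ r i j ≤
      ∑ i : Fin h, ∑ j : Fin m, P (i, j) * b j * Ψ b i j :=
  payment_function_proper_general m h P hPpos hPsum G G' hG'sub φ hφ Ψ hΨ b r hb_sum
end

section
/- Let m and h be positive integers, let P : Fin h × Fin m → ℝ satisfy P(i,j) > 0 for all i,j and ∑_{i=1}^{h} P(i,j) = 1 for every j, let G : ℝ^m → ℝ be any function, let G' : ℝ^m → ℝ^m be any map, and let φ : ℝ^m → ℝ^{h×m} satisfy ∑_{i=1}^{h} φ(r)_{i,j} = G'(r)_j for every r and j. Define Ψ(r, i, j) = G(r) - ⟨G'(r), r⟩ + φ(r)_{i,j} / P(i,j). Then for all probability vectors b, r ∈ Δ_m, the expected utility of reporting r under true belief b satisfies EU(b, r) = ∑_{i=1}^{h} ∑_{j=1}^{m} P(i,j) · b_j · Ψ(r, i, j) = G(r) + ⟨G'(r), b - r⟩.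 -/
open Finset

/- The payment `Ψ(r, i, j)` is a constant `c = G(r) - ⟨G'(r), r⟩` plus a correction `φ(r)_{i,j} / P(i,j)`.
Weighting by the decision probabilities cancels the `1 / P(i,j)`, and the columns of `P` sum to one,
so the expected payment is `c + ∑ⱼ bⱼ ∑ᵢ φ(r)_{i,j} = c + ⟨G'(r), b⟩`, which rearranges to
`G(r) + ⟨G'(r), b - r⟩`. -/

theorem sum_sum_mul_mul_add_div {ι κ : Type*} [Fintype ι] [Fintype κ]
    (P : ι × κ → ℝ) (hP : ∀ i j, P (i, j) ≠ 0) (hPsum : ∀ j, ∑ i, P (i, j) = 1)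
    (b : κ → ℝ) (c : ℝ) (φ : ι → κ → ℝ) :
    ∑ i, ∑ j, P (i, j) * b j * (c + φ i j / P (i, j)) =
      c * ∑ j, b j + ∑ j, b j * ∑ i, φ i j := by
  have hterm : ∀ i j, P (i, j) * b j * (c + φ i j / P (i, j)) =
      P (i, j) * (b j * c) + b j * φ i j := fun i j => by
    field_simp [hP i j]
  simp only [hterm, sum_add_distrib, mul_sum]
  rw [sum_comm, sum_comm (f := fun i j => b j * φ i j)]
  simp only [← sum_mul, hPsum, one_mul, ← mul_sum, mul_comm c]

theorem expected_utility_eq_G_plus_subgradient_term_general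
    (m h : ℕ)
    (P : Fin h × Fin m → ℝ)
    (hPpos : ∀ i j, 0 < P (i, j))
    (hPsum : ∀ j : Fin m, ∑ i : Fin h, P (i, j) = 1)
    (G : (Fin m → ℝ) → ℝ)
    (G' : (Fin m → ℝ) → (Fin m → ℝ))
    (φ : (Fin m → ℝ) → Fin h → Fin m → ℝ)
    (hφ : ∀ (r : Fin m → ℝ) (j : Fin m), ∑ i : Fin h, φ r i j = G' r j)
    (Ψ : (Fin m → ℝ) → Fin h → Fin m → ℝ)
    (hΨ : ∀ (r : Fin m → ℝ) (i : Fin h) (j : Fin m),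
      Ψ r i j = G r - (∑ k, G' r k * r k) + φ r i j / P (i, j))
    (b r : Fin m → ℝ)
    (hb_sum : ∑ j, b j = 1) :
    ∑ i : Fin h, ∑ j : Fin m, P (i, j) * b j * Ψ r i j =
      G r + ∑ j, G' r j * (b j - r j) := by
  simp only [hΨ]
  rw [sum_sum_mul_mul_add_div P (fun i j => (hPpos i j).ne') hPsum, hb_sum]
  simp only [hφ, mul_sub, sum_sub_distrib]
  simp only [mul_comm (b _)]
  ring

/-- For the payment function
`Ψ(r, i, j) = G(r) - ⟨G'(r), r⟩ + φ(r)_{i,j} / P(i,j)`, the expected utility of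
reporting `r` under true belief `b` equals `G(r) + ⟨G'(r), b - r⟩`. -/
theorem expected_utility_eq_G_plus_subgradient_term
    (m h : ℕ) (hm : 0 < m) (hh : 0 < h)
    (P : Fin h × Fin m → ℝ)
    (hPpos : ∀ i j, 0 < P (i, j))
    (hPsum : ∀ j : Fin m, ∑ i : Fin h, P (i, j) = 1)
    (G : (Fin m → ℝ) → ℝ)
    (G' : (Fin m → ℝ) → (Fin m → ℝ))
    (φ : (Fin m → ℝ) → Fin h → Fin m → ℝ)
    (hφ : ∀ (r : Fin m → ℝ) (j : Fin m), ∑ i : Fin h, φ r i j = G' r j)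
    (Ψ : (Fin m → ℝ) → Fin h → Fin m → ℝ)
    (hΨ : ∀ (r : Fin m → ℝ) (i : Fin h) (j : Fin m),
      Ψ r i j = G r - (∑ k, G' r k * r k) + φ r i j / P (i, j))
    (b r : Fin m → ℝ)
    (hb_nonneg : ∀ j, 0 ≤ b j) (hb_sum : ∑ j, b j = 1)
    (hr_nonneg : ∀ j, 0 ≤ r j) (hr_sum : ∑ j, r j = 1) :
    ∑ i : Fin h, ∑ j : Fin m, P (i, j) * b j * Ψ r i j =
      G r + ∑ j, G' r j * (b j - r j) :=
  expected_utility_eq_G_plus_subgradient_term_general m h P hPpos hPsum G G' φ hφ Ψ hΨ b r hb_sum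
end

section
/- Let m be a positive integer, let n be a positive integer (the number of reporting agents), let r^1, ..., r^n ∈ ℝ^m be probability vectors with all components strictly positive (the agents' reports), let w_1, ..., w_n ≥ 0 be expert-assigned weights, let ρ_1, ..., ρ_n ∈ ℝ be the agents' cumulative instantaneous rewards, and let ϖ > 0. Define the components of the weighted average payment by Ψ^{ave}_j = ∑_{a=1}^{n} w_a · ρ_a + ϖ · ∑_{a=1}^{n} w_a · log(r^a_j) for each j, and define the aggregated belief by B_j = exp((Ψ^{ave}_j - ∑_{a=1}^{n} w_a · ρ_a)/ϖ) / ∑_{k=1}^{m} exp((Ψ^{ave}_k - ∑_{a=1}^{n} w_a · ρ_a)/ϖ). Then the aggregated belief equals the normalized weighted geometric mean of the agents' reports: B_j = (∏_{a=1}^{n} (r^a_j)^{w_a}) / (∑_{k=1}^{m} ∏_{a=1}^{n} (r^a_k)^{w_a}) for every j, and in particular B is a probability vector with all components strictly positive. -/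
open Real Finset

/-! The rewards cancel in the softmax exponent, which becomes `∑ₐ w a * log (r a j)`; its
exponential is the weighted geometric mean `∏ₐ r a j ^ w a`, positive since every report is. -/

theorem exp_sum_mul_log_eq_prod_rpow {ι : Type*} (s : Finset ι) (w x : ι → ℝ)
    (hx : ∀ i ∈ s, 0 < x i) :
    exp (∑ i ∈ s, w i * log (x i)) = ∏ i ∈ s, x i ^ w i := by
  rw [exp_sum]
  exact prod_congr rfl fun i hi => by rw [mul_comm, rpow_def_of_pos (hx i hi)]

section Normalize

variable {ι : Type*} [Fintype ι] {f : ι → ℝ}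

theorem div_sum_pos [Nonempty ι] (hf : ∀ i, 0 < f i) (j : ι) : 0 < f j / ∑ k, f k :=
  div_pos (hf j) (sum_pos (fun k _ => hf k) univ_nonempty)

theorem sum_div_sum_self (hf : ∑ k, f k ≠ 0) : ∑ j, f j / ∑ k, f k = 1 := by
  rw [← sum_div, div_self hf]

end Normalize

theorem aggregated_belief_eq_weighted_geometric_mean_general
    (m n : ℕ) (hm : 0 < m)
    (r : Fin n → Fin m → ℝ)
    (hr_pos : ∀ (a : Fin n) (j : Fin m), 0 < r a j)
    (w : Fin n → ℝ)
    (ρ : Fin n → ℝ)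
    (ϖ : ℝ) (hϖ : 0 < ϖ)
    (Ψave : Fin m → ℝ)
    (hΨave : ∀ j : Fin m,
      Ψave j = (∑ a : Fin n, w a * ρ a) + ϖ * ∑ a : Fin n, w a * Real.log (r a j))
    (B : Fin m → ℝ)
    (hB : ∀ j : Fin m,
      B j = Real.exp ((Ψave j - ∑ a : Fin n, w a * ρ a) / ϖ) /
        ∑ k : Fin m, Real.exp ((Ψave k - ∑ a : Fin n, w a * ρ a) / ϖ)) :
    (∀ j : Fin m,
      B j = (∏ a : Fin n, (r a j) ^ (w a)) /
        ∑ k : Fin m, ∏ a : Fin n, (r a k) ^ (w a)) ∧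
    (∀ j : Fin m, 0 < B j) ∧ (∑ j : Fin m, B j = 1) := by
  have hexp : ∀ j, exp ((Ψave j - ∑ a, w a * ρ a) / ϖ) = ∏ a, r a j ^ w a := fun j => by
    rw [hΨave j, add_sub_cancel_left, mul_div_cancel_left₀ _ hϖ.ne']
    exact exp_sum_mul_log_eq_prod_rpow _ _ _ fun a _ => hr_pos a j
  have hB_geom : ∀ j, B j = (∏ a, r a j ^ w a) / ∑ k, ∏ a, r a k ^ w a := fun j => by
    simp only [hB, hexp]
  have hgeom_pos : ∀ j, 0 < ∏ a, r a j ^ w a :=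
    fun j => prod_pos fun a _ => rpow_pos_of_pos (hr_pos a j) _
  have : Nonempty (Fin m) := ⟨⟨0, hm⟩⟩
  refine ⟨hB_geom, fun j => hB_geom j ▸ div_sum_pos hgeom_pos j, ?_⟩
  simp only [hB_geom]
  exact sum_div_sum_self (sum_pos (fun k _ => hgeom_pos k) univ_nonempty).ne'

/-- The aggregated belief obtained as the generalized inverse
(softmax) of the weighted average payment function equals the normalized
weighted geometric mean of the agents' reports, and is a strictly positive
probability vector. -/
theorem aggregated_belief_eq_weighted_geometric_mean
    (m n : ℕ) (hm : 0 < m) (hn : 0 < n)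
    (r : Fin n → Fin m → ℝ)
    (hr_pos : ∀ (a : Fin n) (j : Fin m), 0 < r a j)
    (hr_sum : ∀ a : Fin n, ∑ j : Fin m, r a j = 1)
    (w : Fin n → ℝ) (hw : ∀ a, 0 ≤ w a)
    (ρ : Fin n → ℝ)
    (ϖ : ℝ) (hϖ : 0 < ϖ)
    (Ψave : Fin m → ℝ)
    (hΨave : ∀ j : Fin m,
      Ψave j = (∑ a : Fin n, w a * ρ a) + ϖ * ∑ a : Fin n, w a * Real.log (r a j))
    (B : Fin m → ℝ)
    (hB : ∀ j : Fin m,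
      B j = Real.exp ((Ψave j - ∑ a : Fin n, w a * ρ a) / ϖ) /
        ∑ k : Fin m, Real.exp ((Ψave k - ∑ a : Fin n, w a * ρ a) / ϖ)) :
    (∀ j : Fin m,
      B j = (∏ a : Fin n, (r a j) ^ (w a)) /
        ∑ k : Fin m, ∏ a : Fin n, (r a k) ^ (w a)) ∧
    (∀ j : Fin m, 0 < B j) ∧ (∑ j : Fin m, B j = 1) :=
  aggregated_belief_eq_weighted_geometric_mean_general m n hm r hr_pos w ρ ϖ hϖ Ψave hΨave B hB
end
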